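/- arXiv:2602.19860 — 2 statements merged into one kernel-verified Lean document; each statement's English description precedes it below -/
import Mathlib

section
/- Given an adjunction F ⊣ U between monoidal categories, there is a bijection between oplax monoidal structures on F and lax monoidal structures on U. In particular, given an oplax monoidal structure (F₂, F₀) on F, the corresponding lax structure on U is U₂ : Ux ⊗ Uy → UF(Ux ⊗ Uy) → U(FUx ⊗ FUy) → U(x ⊗ y), using the unit of the adjunction, F₂, and the counits ε_x ⊗ ε_y. -/
open CategoryTheory MonoidalCategory

universe v₁ v₂ u₁ u₂

variable {C : Type u₁} [Category.{v₁} C] [MonoidalCategory C]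
variable {D : Type u₂} [Category.{v₂} D] [MonoidalCategory D]

/-- An oplax monoidal structure on a functor `F` between monoidal categories. -/
structure OplaxMonoidalStruct (F : C ⥤ D) where
  δ : ∀ X Y : C, F.obj (X ⊗ Y) ⟶ F.obj X ⊗ F.obj Y
  ε : F.obj (𝟙_ C) ⟶ 𝟙_ D
  δ_natural : ∀ {X X' Y Y' : C} (f : X ⟶ X') (g : Y ⟶ Y'),
    F.map (f ⊗ₘ g) ≫ δ X' Y' = δ X Y ≫ (F.map f ⊗ₘ F.map g)
  coassoc : ∀ X Y Z : C,
    δ (X ⊗ Y) Z ≫ (δ X Y ⊗ₘ 𝟙 (F.obj Z)) ≫ (α_ (F.obj X) (F.obj Y) (F.obj Z)).hom =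
      F.map (α_ X Y Z).hom ≫ δ X (Y ⊗ Z) ≫ (𝟙 (F.obj X) ⊗ₘ δ Y Z)
  left_counit : ∀ X : C,
    δ (𝟙_ C) X ≫ (ε ⊗ₘ 𝟙 (F.obj X)) ≫ (λ_ (F.obj X)).hom = F.map (λ_ X).hom
  right_counit : ∀ X : C,
    δ X (𝟙_ C) ≫ (𝟙 (F.obj X) ⊗ₘ ε) ≫ (ρ_ (F.obj X)).hom = F.map (ρ_ X).hom

/-- A lax monoidal structure on a functor `U` between monoidal categories. -/
structure LaxMonoidalStruct (U : D ⥤ C) where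
  μ : ∀ X Y : D, U.obj X ⊗ U.obj Y ⟶ U.obj (X ⊗ Y)
  η : 𝟙_ C ⟶ U.obj (𝟙_ D)
  μ_natural : ∀ {X X' Y Y' : D} (f : X ⟶ X') (g : Y ⟶ Y'),
    (U.map f ⊗ₘ U.map g) ≫ μ X' Y' = μ X Y ≫ U.map (f ⊗ₘ g)
  assoc : ∀ X Y Z : D,
    (μ X Y ⊗ₘ 𝟙 (U.obj Z)) ≫ μ (X ⊗ Y) Z ≫ U.map (α_ X Y Z).hom =
      (α_ (U.obj X) (U.obj Y) (U.obj Z)).hom ≫ (𝟙 (U.obj X) ⊗ₘ μ Y Z) ≫ μ X (Y ⊗ Z)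
  left_unit : ∀ X : D,
    (η ⊗ₘ 𝟙 (U.obj X)) ≫ μ (𝟙_ D) X ≫ U.map (λ_ X).hom = (λ_ (U.obj X)).hom
  right_unit : ∀ X : D,
    (𝟙 (U.obj X) ⊗ₘ η) ≫ μ X (𝟙_ D) ≫ U.map (ρ_ X).hom = (ρ_ (U.obj X)).hom

/-! Both structures are Mathlib's `Functor.OplaxMonoidal` and `Functor.LaxMonoidal` with the axioms
phrased through `⊗ₘ` instead of whiskerings, so the bijection is doctrinal adjunction in the form
`Adjunction.laxMonoidalEquivOplaxMonoidal`: the lax multiplication on `U` is the adjunct of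
`δ ≫ (ε_x ⊗ ε_y)`. -/

open Functor

namespace OplaxMonoidalStruct

variable {F : C ⥤ D}

abbrev toOplaxMonoidal (o : OplaxMonoidalStruct F) : F.OplaxMonoidal where
  η := o.ε
  δ := o.δ
  δ_natural_left f X := by simpa using (o.δ_natural f (𝟙 X)).symm
  δ_natural_right X f := by simpa using (o.δ_natural (𝟙 X) f).symm
  oplax_associativity X Y Z := by simpa only [tensorHom_id, id_tensorHom] using o.coassoc X Y Z
  oplax_left_unitality X := by
    have h : o.δ (𝟙_ C) X ≫ o.ε ▷ F.obj X = F.map (λ_ X).hom ≫ (λ_ (F.obj X)).inv := by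
      simp [← o.left_counit X]
    simp [h]
  oplax_right_unitality X := by
    have h : o.δ X (𝟙_ C) ≫ F.obj X ◁ o.ε = F.map (ρ_ X).hom ≫ (ρ_ (F.obj X)).inv := by
      simp [← o.right_counit X]
    simp [h]

def ofOplaxMonoidal [F.OplaxMonoidal] : OplaxMonoidalStruct F where
  δ := OplaxMonoidal.δ F
  ε := OplaxMonoidal.η F
  δ_natural f g := (OplaxMonoidal.δ_natural F f g).symm
  coassoc X Y Z := by
    simpa only [tensorHom_id, id_tensorHom] using OplaxMonoidal.associativity F X Y Z
  left_counit X := by simpa only [tensorHom_id] using OplaxMonoidal.left_unitality_hom F X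
  right_counit X := by simpa only [id_tensorHom] using OplaxMonoidal.right_unitality_hom F X

def equivOplaxMonoidal : OplaxMonoidalStruct F ≃ F.OplaxMonoidal where
  toFun := toOplaxMonoidal
  invFun _ := ofOplaxMonoidal
  left_inv _ := rfl
  right_inv _ := rfl

end OplaxMonoidalStruct

namespace LaxMonoidalStruct

variable {U : D ⥤ C}

abbrev toLaxMonoidal (l : LaxMonoidalStruct U) : U.LaxMonoidal :=
  .ofTensorHom l.η l.μ l.μ_natural l.assoc (fun X ↦ (l.left_unit X).symm)
    (fun X ↦ (l.right_unit X).symm)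

def ofLaxMonoidal [U.LaxMonoidal] : LaxMonoidalStruct U where
  μ := LaxMonoidal.μ U
  η := LaxMonoidal.ε U
  μ_natural := LaxMonoidal.μ_natural U
  assoc X Y Z := by simpa only [tensorHom_id, id_tensorHom] using LaxMonoidal.associativity U X Y Z
  left_unit X := by simpa only [tensorHom_id] using (LaxMonoidal.left_unitality U X).symm
  right_unit X := by simpa only [id_tensorHom] using (LaxMonoidal.right_unitality U X).symm

def equivLaxMonoidal : LaxMonoidalStruct U ≃ U.LaxMonoidal where
  toFun := toLaxMonoidal
  invFun _ := ofLaxMonoidal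
  left_inv _ := rfl
  right_inv _ := rfl

end LaxMonoidalStruct

/-- Doctrinal adjunction: given an adjunction `F ⊣ U` between monoidal categories,
oplax monoidal structures on `F` are in bijection with lax monoidal structures on `U`;
given an oplax structure `(F₂, F₀)` on `F`, the corresponding lax multiplication on `U` is
`Ux ⊗ Uy ⟶ UF(Ux ⊗ Uy) ⟶ U(FUx ⊗ FUy) ⟶ U(x ⊗ y)`, built from the unit of the
adjunction, `F₂`, and the counits `ε_x ⊗ ε_y`. -/
theorem oplax_structures_equiv_lax_structures
    (F : C ⥤ D) (U : D ⥤ C) (adj : F ⊣ U) :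
    ∃ e : OplaxMonoidalStruct F ≃ LaxMonoidalStruct U,
      ∀ (o : OplaxMonoidalStruct F) (x y : D),
        (e o).μ x y =
          adj.unit.app (U.obj x ⊗ U.obj y) ≫
            U.map (o.δ (U.obj x) (U.obj y)) ≫
            U.map (adj.counit.app x ⊗ₘ adj.counit.app y) := by
  refine ⟨OplaxMonoidalStruct.equivOplaxMonoidal.trans
    (adj.laxMonoidalEquivOplaxMonoidal.symm.trans LaxMonoidalStruct.equivLaxMonoidal.symm), ?_⟩
  intro o x y
  change adj.homEquiv _ _ (o.δ _ _ ≫ (adj.counit.app x ⊗ₘ adj.counit.app y)) = _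
  rw [adj.homEquiv_unit, U.map_comp]
end

section
/- Let T be a right exact monad on an abelian category A. Then the Eilenberg–Moore category Aᵀ is abelian, and for any projective object P ∈ A, the free module (TP, μ_P) is projective in Aᵀ. Moreover, if A has enough projectives then every projective object of Aᵀ is a direct summand of a free module TP with P projective in A. -/
open CategoryTheory CategoryTheory.Limits

universe v u

/-! Since `T` is right exact, the forgetful functor `Aᵀ ⥤ A` creates finite limits and finite
colimits; being exact and conservative, it carries every coimage-image comparison of `Aᵀ` to one of
`A`, hence to an isomorphism, so `Aᵀ` is abelian. For projectives: an algebra `Q` is a quotient of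
the free algebra on a projective cover of its carrier, and the quotient map splits when `Q` is
projective. -/

noncomputable abbrev CategoryTheory.Abelian.ofReflectsIsomorphisms {C D : Type*} [Category C]
    [Preadditive C] [HasFiniteLimits C] [HasFiniteColimits C] [Category D] [Abelian D]
    (F : C ⥤ D) [F.PreservesZeroMorphisms] [PreservesFiniteLimits F] [PreservesFiniteColimits F]
    [F.ReflectsIsomorphisms] : Abelian C :=
  have {X Y : C} (f : X ⟶ Y) : IsIso (Abelian.coimageImageComparison f) := by
    have : IsIso (F.map (Abelian.coimageImageComparison f)) :=
      (Arrow.isIso_iff_isIso_of_isIso (Abelian.PreservesCoimageImageComparison.iso F f).hom).mpr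
        inferInstance
    exact isIso_of_reflects_iso _ F
  Abelian.ofCoimageImageComparisonIsIso

theorem CategoryTheory.Adjunction.exists_retract_obj_of_projective {C D : Type*} [Category C]
    [Category D] {F : C ⥤ D} {G : D ⥤ C} (adj : F ⊣ G) [G.Faithful] [EnoughProjectives C]
    (Q : D) [Projective Q] :
    ∃ (P : C) (_ : Projective P) (s : Q ⟶ F.obj P) (r : F.obj P ⟶ Q), s ≫ r = 𝟙 Q := by
  have := adj.leftAdjoint_preservesColimits
  -- epi: `F` preserves epis and the counit of a faithful right adjoint is epi
  let r : F.obj (Projective.over (G.obj Q)) ⟶ Q :=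
    F.map (Projective.π (G.obj Q)) ≫ adj.counit.app Q
  exact ⟨_, inferInstance, Projective.factorThru (𝟙 Q) r, r, Projective.factorThru_comp _ _⟩

namespace CategoryTheory.Monad

variable {A : Type u} [Category.{v} A] [Abelian A] (T : Monad A) [PreservesFiniteColimits (T : A ⥤ A)]

instance additive_of_preservesFiniteColimits : (T : A ⥤ A).Additive :=
  have := preservesBinaryBiproducts_of_preservesBinaryCoproducts (T : A ⥤ A)
  Functor.additive_of_preservesBinaryBiproducts _

instance : HasFiniteLimits T.Algebra :=
  ⟨fun _ _ _ => hasLimitsOfShape_of_hasLimitsOfShape_createsLimitsOfShape T.forget⟩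

instance : HasFiniteColimits T.Algebra :=
  ⟨fun _ _ _ => hasColimitsOfShape_of_hasColimitsOfShape_createsColimitsOfShape T.forget⟩

instance : PreservesFiniteLimits T.forget :=
  ⟨fun _ _ _ => preservesLimitOfShape_of_createsLimitsOfShape_and_hasLimitsOfShape T.forget⟩

instance : PreservesFiniteColimits T.forget :=
  ⟨fun _ _ _ => preservesColimitOfShape_of_createsColimitsOfShape_and_hasColimitsOfShape T.forget⟩

noncomputable abbrev algebraAbelian : Abelian T.Algebra :=
  Abelian.ofReflectsIsomorphisms T.forget

end CategoryTheory.Monad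

/-- Let `T` be a right exact monad on an abelian category `A`.  Then the
Eilenberg–Moore category `Aᵀ` is abelian, free modules on projective objects are
projective, and if `A` has enough projectives then every projective object of `Aᵀ`
is a direct summand of a free module on a projective object of `A`. -/
theorem right_exact_monad_algebra_abelian_and_projectives
    {A : Type u} [Category.{v} A] [Abelian A]
    (T : Monad A) [PreservesFiniteColimits (T : A ⥤ A)] :
    Nonempty (Abelian T.Algebra) ∧
    (∀ P : A, Projective P → Projective (T.free.obj P)) ∧
    (EnoughProjectives A →
      ∀ Q : T.Algebra, Projective Q →
        ∃ (P : A) (_ : Projective P) (s : Q ⟶ T.free.obj P) (r : T.free.obj P ⟶ Q),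
          s ≫ r = 𝟙 Q) :=
  ⟨⟨T.algebraAbelian⟩, T.adj.map_projective,
    fun _ Q _ => T.adj.exists_retract_obj_of_projective Q⟩
end
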